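/- (Sufficient decrease) Along any sequence generated by the algorithm, for every k ≥ 1 and i ∈ {1,…,n}, f(x^{k,i−1}) − f(x^{k,i}) ≥ (1/(2 L_i)) ‖∇_i f(x^{k,i−1})‖², where L_i = 4(|A_i| + |B_i|). -/

import Mathlib

/-!
Fix all blocks but the `i`-th. As a function of `y = x_i`, `f` is, up to a constant,
`F y = ∑_{j ∈ A_i} dist(y, B(a_j, d̂_ij))² + ∑_{q ∈ B_i} dist(y, B(x_q, l̂_iq))²`: by the symmetry
of the neighbour relation every edge at `i` occurs twice in the double sum of `f`, which cancels
the factor `1/2`. Each summand `φ = dist(·, B(c, r))² = max(‖· - c‖ - r, 0)²` satisfies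
`φ x + ⟪2 (x - P x), h⟫ ≤ φ (x + h) ≤ φ x + ⟪2 (x - P x), h⟫ + ‖h‖²`, the lower bound by convexity
and the upper one because `P x` lies in the ball. Hence `∇F x = ∑ 2 (x - P x)`, `F` obeys the
quadratic upper bound with constant `|A_i| + |B_i| = L_i / 4 ≤ L_i / 2`, and the PPM update is
exactly the gradient step `x - ∇F x / L_i`; the descent lemma then gives the decrease
`‖∇F x‖² / (2 L_i)`.
-/

open Finset Filter

noncomputable def obj {d n : ℕ} {J : Type*} (a : J → EuclideanSpace ℝ (Fin d))
    (A : Fin n → Finset J) (dhat : Fin n → J → ℝ)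
    (B : Fin n → Finset (Fin n)) (lhat : Fin n → Fin n → ℝ)
    (x : Fin n → EuclideanSpace ℝ (Fin d)) : ℝ :=
  (∑ i, ∑ j ∈ A i, max (‖x i - a j‖ - dhat i j) 0 ^ 2)
    + (1 / 2) * ∑ i, ∑ q ∈ B i, max (‖x i - x q‖ - lhat i q) 0 ^ 2

noncomputable def projBall {d : ℕ} (a : EuclideanSpace ℝ (Fin d)) (r : ℝ)
    (z : EuclideanSpace ℝ (Fin d)) : EuclideanSpace ℝ (Fin d) :=
  if ‖z - a‖ ≤ r then z else a + (r / ‖z - a‖) • (z - a)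

/-- Partial gradient of `f` with respect to the `i`-th block. -/
noncomputable def blockGrad {d n : ℕ} (f : (Fin n → EuclideanSpace ℝ (Fin d)) → ℝ)
    (i : Fin n) (x : Fin n → EuclideanSpace ℝ (Fin d)) : EuclideanSpace ℝ (Fin d) :=
  gradient (fun y => f (Function.update x i y)) (x i)

/-- The Coop. PPM algorithm: `X (k+1)` is obtained from `X k` by updating the
blocks successively for `i = 1, …, n`. -/
def IsPPM {d n : ℕ} {J : Type*} (a : J → EuclideanSpace ℝ (Fin d))
    (A : Fin n → Finset J) (dhat : Fin n → J → ℝ)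
    (B : Fin n → Finset (Fin n)) (lhat : Fin n → Fin n → ℝ)
    (X : ℕ → Fin n → EuclideanSpace ℝ (Fin d)) : Prop :=
  ∀ (k : ℕ) (i : Fin n),
    X (k + 1) i = (1 / 2 : ℝ) • X k i
      + (1 / (2 * (((A i).card : ℝ) + ((B i).card : ℝ)))) •
        ((∑ j ∈ A i, projBall (a j) (dhat i j) (X k i))
          + ∑ q ∈ B i, projBall (if q < i then X (k + 1) q else X k q) (lhat i q) (X k i))

/-- The intermediate configuration `x^{k+1, m}`: the first `m` blocks are those of
`X (k+1)` and the remaining blocks are those of `X k`. -/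
def interm {d n : ℕ} (X : ℕ → Fin n → EuclideanSpace ℝ (Fin d)) (k m : ℕ) :
    Fin n → EuclideanSpace ℝ (Fin d) :=
  fun t => if (t : ℕ) < m then X (k + 1) t else X k t

open scoped RealInnerProductSpace

section Smooth

variable {E : Type*} [NormedAddCommGroup E] [InnerProductSpace ℝ E]

theorem hasGradientAt_of_le_of_le [CompleteSpace E] {f : E → ℝ} {g x : E} {C : ℝ}
    (hlow : ∀ h, f x + ⟪g, h⟫ ≤ f (x + h))
    (hup : ∀ h, f (x + h) ≤ f x + ⟪g, h⟫ + C * ‖h‖ ^ 2) :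
    HasGradientAt f g x := by
  rw [hasGradientAt_iff_hasFDerivAt, hasFDerivAt_iff_isLittleO_nhds_zero]
  refine Asymptotics.IsBigO.trans_isLittleO (Asymptotics.IsBigO.of_bound |C|
    (Eventually.of_forall fun h => ?_)) (Asymptotics.isLittleO_norm_pow_id one_lt_two)
  rw [InnerProductSpace.toDual_apply_apply, Real.norm_eq_abs, norm_pow, norm_norm, abs_le]
  constructor <;> nlinarith [hlow h, hup h, le_abs_self C, neg_abs_le C, sq_nonneg ‖h‖]

theorem gradient_step_descent {F : E → ℝ} {g x : E} {L : ℝ}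
    (hup : ∀ h, F (x + h) ≤ F x + ⟪g, h⟫ + L / 2 * ‖h‖ ^ 2) :
    1 / (2 * L) * ‖g‖ ^ 2 ≤ F x - F (x - (1 / L) • g) := by
  have := hup (-((1 / L) • g))
  rw [← sub_eq_add_neg, inner_neg_right, real_inner_smul_right, real_inner_self_eq_norm_sq,
    norm_neg, norm_smul, mul_pow, Real.norm_eq_abs, sq_abs] at this
  rcases eq_or_ne L 0 with rfl | hL
  · simp
  · have : 1 / L * ‖g‖ ^ 2 - L / 2 * ((1 / L) ^ 2 * ‖g‖ ^ 2) = 1 / (2 * L) * ‖g‖ ^ 2 := by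
      field_simp; ring
    linarith

end Smooth

theorem Finset.sum_sum_eq_sum_add_sum_erase {ι M : Type*} [Fintype ι] [DecidableEq ι]
    [AddCommMonoid M] {s : ι → Finset ι} (hirr : ∀ i, i ∉ s i)
    (hsymm : ∀ i q, q ∈ s i ↔ i ∈ s q) (F : ι → ι → M) (i : ι) :
    ∑ t, ∑ q ∈ s t, F t q
      = ∑ q ∈ s i, (F i q + F q i) + ∑ t ∈ univ.erase i, ∑ q ∈ (s t).erase i, F t q := by
  have split : ∀ t, ∑ q ∈ s t, F t q
      = (if t ∈ s i then F t i else 0) + ∑ q ∈ (s t).erase i, F t q := by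
    intro t
    split_ifs with h
    · exact (add_sum_erase _ _ ((hsymm i t).1 h)).symm
    · rw [erase_eq_of_notMem (fun h' => h ((hsymm t i).1 h')), zero_add]
  rw [sum_congr rfl fun t _ => split t, sum_add_distrib, sum_ite_mem, univ_inter,
    ← add_sum_erase univ _ (mem_univ i), erase_eq_of_notMem (hirr i), ← add_assoc,
    ← sum_add_distrib]
  exact congrArg (· + _) (sum_congr rfl fun _ _ => add_comm _ _)

section Ball

variable {d : ℕ} {c x h : EuclideanSpace ℝ (Fin d)} {r : ℝ}

noncomputable def sqDistBall (c : EuclideanSpace ℝ (Fin d)) (r : ℝ)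
    (y : EuclideanSpace ℝ (Fin d)) : ℝ :=
  max (‖y - c‖ - r) 0 ^ 2

theorem sub_projBall_eq_smul :
    x - projBall c r x = (max (‖x - c‖ - r) 0 / ‖x - c‖) • (x - c) := by
  unfold projBall
  split_ifs with hin
  · simp [max_eq_right (sub_nonpos.2 hin)]
  · rcases eq_or_ne ‖x - c‖ 0 with h0 | h0
    · simp [norm_eq_zero.1 h0]
    · rw [max_eq_left (by linarith [not_le.1 hin]), sub_div, div_self h0]
      module

theorem norm_projBall_sub_le (hr : 0 ≤ r) : ‖projBall c r x - c‖ ≤ r := by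
  unfold projBall
  split_ifs with hin
  · exact hin
  · have hpos : 0 < ‖x - c‖ := hr.trans_lt (not_le.1 hin)
    rw [add_sub_cancel_left, norm_smul, Real.norm_eq_abs, abs_div, abs_of_nonneg hr,
      abs_of_pos hpos, div_mul_cancel₀ _ hpos.ne']

theorem norm_sub_projBall (hr : 0 ≤ r) : ‖x - projBall c r x‖ = max (‖x - c‖ - r) 0 := by
  rw [sub_projBall_eq_smul, norm_smul, norm_div, norm_norm, Real.norm_of_nonneg (le_max_right _ _)]
  rcases eq_or_ne ‖x - c‖ 0 with h0 | h0
  · simp [h0, hr]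
  · exact div_mul_cancel₀ _ h0

theorem sqDistBall_add_le (hr : 0 ≤ r) :
    sqDistBall c r (x + h) ≤ sqDistBall c r x + ⟪(2 : ℝ) • (x - projBall c r x), h⟫ + ‖h‖ ^ 2 := by
  have hdist : max (‖x + h - c‖ - r) 0 ≤ ‖x - projBall c r x + h‖ := by
    refine max_le ?_ (norm_nonneg _)
    have := norm_sub_le_norm_sub_add_norm_sub (x + h) (projBall c r x) c
    rw [sub_add_eq_add_sub]
    linarith [norm_projBall_sub_le (c := c) (x := x) hr]
  calc sqDistBall c r (x + h) ≤ ‖x - projBall c r x + h‖ ^ 2 :=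
        pow_le_pow_left₀ (le_max_right _ _) hdist 2
    _ = _ := by
        rw [norm_add_sq_real, norm_sub_projBall hr, real_inner_smul_left, sqDistBall]

theorem inner_sub_projBall_le :
    ⟪x - projBall c r x, h⟫ ≤ max (‖x - c‖ - r) 0 * (‖x + h - c‖ - ‖x - c‖) := by
  have hcs : ⟪x - c, h⟫ ≤ ‖x - c‖ * ‖x + h - c‖ - ‖x - c‖ ^ 2 := by
    have := real_inner_le_norm (x - c) (x + h - c)
    rw [add_sub_right_comm, inner_add_right, real_inner_self_eq_norm_sq,
      ← add_sub_right_comm] at this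
    linarith
  rw [sub_projBall_eq_smul, real_inner_smul_left]
  rcases eq_or_ne ‖x - c‖ 0 with h0 | h0
  · simp only [h0, div_zero, zero_mul, sub_zero]
    exact mul_nonneg (le_max_right _ _) (norm_nonneg _)
  · calc max (‖x - c‖ - r) 0 / ‖x - c‖ * ⟪x - c, h⟫
        ≤ max (‖x - c‖ - r) 0 / ‖x - c‖ * (‖x - c‖ * ‖x + h - c‖ - ‖x - c‖ ^ 2) :=
          mul_le_mul_of_nonneg_left hcs (by positivity)
      _ = _ := by field_simp

theorem le_sqDistBall_add :
    sqDistBall c r x + ⟪(2 : ℝ) • (x - projBall c r x), h⟫ ≤ sqDistBall c r (x + h) := by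
  rw [real_inner_smul_left, sqDistBall, sqDistBall]
  have := inner_sub_projBall_le (c := c) (r := r) (x := x) (h := h)
  set s := ‖x - c‖
  set s' := ‖x + h - c‖
  rcases le_total (s - r) 0 with hs | hs
  · rw [max_eq_right hs] at this ⊢
    nlinarith [sq_nonneg (max (s' - r) 0)]
  · rw [max_eq_left hs] at this ⊢
    nlinarith [le_max_left (s' - r) 0, le_max_right (s' - r) 0, sq_nonneg (max (s' - r) 0 - (s - r))]

end Ball

section Block

variable {d n : ℕ} {J : Type*} {a : J → EuclideanSpace ℝ (Fin d)} {A : Fin n → Finset J}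
  {dhat : Fin n → J → ℝ} {B : Fin n → Finset (Fin n)} {lhat : Fin n → Fin n → ℝ}

theorem sum_sqDistBall_add_le {ι : Type*} (c : ι → EuclideanSpace ℝ (Fin d)) {s : Finset ι}
    {r : ι → ℝ} (hr : ∀ k ∈ s, 0 ≤ r k) (x h : EuclideanSpace ℝ (Fin d)) :
    ∑ k ∈ s, sqDistBall (c k) (r k) (x + h)
      ≤ ∑ k ∈ s, sqDistBall (c k) (r k) x
        + ⟪∑ k ∈ s, (2 : ℝ) • (x - projBall (c k) (r k) x), h⟫ + #s * ‖h‖ ^ 2 :=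
  (sum_le_sum fun k hk => sqDistBall_add_le (hr k hk)).trans_eq <| by
    rw [sum_add_distrib, sum_add_distrib, sum_inner, sum_const, nsmul_eq_mul]

theorem le_sum_sqDistBall_add {ι : Type*} (s : Finset ι) (c : ι → EuclideanSpace ℝ (Fin d))
    (r : ι → ℝ) (x h : EuclideanSpace ℝ (Fin d)) :
    ∑ k ∈ s, sqDistBall (c k) (r k) x + ⟪∑ k ∈ s, (2 : ℝ) • (x - projBall (c k) (r k) x), h⟫
      ≤ ∑ k ∈ s, sqDistBall (c k) (r k) (x + h) := by
  rw [sum_inner, ← sum_add_distrib]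
  exact sum_le_sum fun k _ => le_sqDistBall_add

variable (a A dhat B lhat) in
noncomputable def blockObj (w : Fin n → EuclideanSpace ℝ (Fin d)) (i : Fin n)
    (y : EuclideanSpace ℝ (Fin d)) : ℝ :=
  ∑ j ∈ A i, sqDistBall (a j) (dhat i j) y + ∑ q ∈ B i, sqDistBall (w q) (lhat i q) y

variable (a A dhat B lhat) in
noncomputable def blockDir (w : Fin n → EuclideanSpace ℝ (Fin d)) (i : Fin n)
    (x : EuclideanSpace ℝ (Fin d)) : EuclideanSpace ℝ (Fin d) :=
  ∑ j ∈ A i, (2 : ℝ) • (x - projBall (a j) (dhat i j) x)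
    + ∑ q ∈ B i, (2 : ℝ) • (x - projBall (w q) (lhat i q) x)

theorem blockObj_add_le {i : Fin n} (hdhat : ∀ j ∈ A i, 0 ≤ dhat i j)
    (hlhat : ∀ q ∈ B i, 0 ≤ lhat i q) (w : Fin n → EuclideanSpace ℝ (Fin d))
    (x h : EuclideanSpace ℝ (Fin d)) :
    blockObj a A dhat B lhat w i (x + h)
      ≤ blockObj a A dhat B lhat w i x + ⟪blockDir a A dhat B lhat w i x, h⟫
        + (#(A i) + #(B i)) * ‖h‖ ^ 2 := by
  have hA := sum_sqDistBall_add_le a hdhat x h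
  have hB := sum_sqDistBall_add_le w hlhat x h
  rw [blockObj, blockObj, blockDir, inner_add_left]
  linarith

theorem le_blockObj_add (w : Fin n → EuclideanSpace ℝ (Fin d)) (i : Fin n)
    (x h : EuclideanSpace ℝ (Fin d)) :
    blockObj a A dhat B lhat w i x + ⟪blockDir a A dhat B lhat w i x, h⟫
      ≤ blockObj a A dhat B lhat w i (x + h) := by
  have hA := le_sum_sqDistBall_add (A i) a (dhat i) x h
  have hB := le_sum_sqDistBall_add (B i) w (lhat i) x h
  rw [blockObj, blockObj, blockDir, inner_add_left]
  linarith

theorem obj_update_eq_blockObj_add (hBirr : ∀ i : Fin n, i ∉ B i)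
    (hBsymm : ∀ i q : Fin n, q ∈ B i ↔ i ∈ B q) (hlsymm : ∀ i q : Fin n, lhat i q = lhat q i)
    (w : Fin n → EuclideanSpace ℝ (Fin d)) (i : Fin n) :
    ∃ C, ∀ y, obj a A dhat B lhat (Function.update w i y) = blockObj a A dhat B lhat w i y + C := by
  refine ⟨∑ t ∈ univ.erase i, ∑ j ∈ A t, sqDistBall (a j) (dhat t j) (w t)
      + (1 / 2) * ∑ t ∈ univ.erase i, ∑ q ∈ (B t).erase i,
          max (‖w t - w q‖ - lhat t q) 0 ^ 2, fun y => ?_⟩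
  have hui : Function.update w i y i = y := Function.update_self i y w
  have hu : ∀ t ≠ i, Function.update w i y t = w t := fun t ht => Function.update_of_ne ht y w
  generalize Function.update w i y = u at hui hu
  have hS1 : ∑ t, ∑ j ∈ A t, max (‖u t - a j‖ - dhat t j) 0 ^ 2
      = ∑ j ∈ A i, sqDistBall (a j) (dhat i j) y
        + ∑ t ∈ univ.erase i, ∑ j ∈ A t, sqDistBall (a j) (dhat t j) (w t) := by
    rw [← add_sum_erase univ _ (mem_univ i), hui]
    exact congrArg _ (sum_congr rfl fun t ht => by rw [hu t (ne_of_mem_erase ht)]; rfl)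
  have hS2 : ∑ t, ∑ q ∈ B t, max (‖u t - u q‖ - lhat t q) 0 ^ 2
      = 2 * ∑ q ∈ B i, sqDistBall (w q) (lhat i q) y
        + ∑ t ∈ univ.erase i, ∑ q ∈ (B t).erase i, max (‖w t - w q‖ - lhat t q) 0 ^ 2 := by
    rw [sum_sum_eq_sum_add_sum_erase hBirr hBsymm (fun t q => max (‖u t - u q‖ - lhat t q) 0 ^ 2),
      mul_sum]
    congr 1
    · refine sum_congr rfl fun q hq => ?_
      have hq' : q ≠ i := fun h => hBirr i (h ▸ hq)
      rw [hui, hu q hq', norm_sub_rev (w q), hlsymm q i, sqDistBall]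
      ring
    · refine sum_congr rfl fun t ht => sum_congr rfl fun q hq => ?_
      rw [hu t (ne_of_mem_erase ht), hu q (ne_of_mem_erase hq)]
  rw [obj, hS1, hS2, blockObj]
  ring

theorem le_obj_update_add (hBirr : ∀ i : Fin n, i ∉ B i)
    (hBsymm : ∀ i q : Fin n, q ∈ B i ↔ i ∈ B q) (hlsymm : ∀ i q : Fin n, lhat i q = lhat q i)
    (w : Fin n → EuclideanSpace ℝ (Fin d)) (i : Fin n)
    (x h : EuclideanSpace ℝ (Fin d)) :
    obj a A dhat B lhat (Function.update w i x) + ⟪blockDir a A dhat B lhat w i x, h⟫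
      ≤ obj a A dhat B lhat (Function.update w i (x + h)) := by
  obtain ⟨C, hC⟩ := obj_update_eq_blockObj_add hBirr hBsymm hlsymm w i
  rw [hC, hC, add_right_comm]
  exact add_le_add_left (le_blockObj_add w i x h) C

theorem obj_update_add_le (hBirr : ∀ i : Fin n, i ∉ B i)
    (hBsymm : ∀ i q : Fin n, q ∈ B i ↔ i ∈ B q) (hlsymm : ∀ i q : Fin n, lhat i q = lhat q i)
    {i : Fin n} (hdhat : ∀ j ∈ A i, 0 ≤ dhat i j)
    (hlhat : ∀ q ∈ B i, 0 ≤ lhat i q) (w : Fin n → EuclideanSpace ℝ (Fin d))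
    (x h : EuclideanSpace ℝ (Fin d)) :
    obj a A dhat B lhat (Function.update w i (x + h))
      ≤ obj a A dhat B lhat (Function.update w i x) + ⟪blockDir a A dhat B lhat w i x, h⟫
        + (#(A i) + #(B i)) * ‖h‖ ^ 2 := by
  obtain ⟨C, hC⟩ := obj_update_eq_blockObj_add hBirr hBsymm hlsymm w i
  rw [hC, hC, add_right_comm _ C, add_right_comm _ C]
  exact add_le_add_left (blockObj_add_le hdhat hlhat w x h) C

theorem blockGrad_obj (hBirr : ∀ i : Fin n, i ∉ B i)
    (hBsymm : ∀ i q : Fin n, q ∈ B i ↔ i ∈ B q) (hlsymm : ∀ i q : Fin n, lhat i q = lhat q i)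
    {i : Fin n} (hdhat : ∀ j ∈ A i, 0 ≤ dhat i j)
    (hlhat : ∀ q ∈ B i, 0 ≤ lhat i q) (w : Fin n → EuclideanSpace ℝ (Fin d)) :
    blockGrad (obj a A dhat B lhat) i w = blockDir a A dhat B lhat w i (w i) :=
  (hasGradientAt_of_le_of_le (le_obj_update_add hBirr hBsymm hlsymm w i (w i))
    (obj_update_add_le hBirr hBsymm hlsymm hdhat hlhat w (w i))).gradient

end Block

section Algorithm

variable {d n : ℕ} (X : ℕ → Fin n → EuclideanSpace ℝ (Fin d)) (k : ℕ) (i : Fin n)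

theorem interm_apply_self : interm X k i i = X k i :=
  if_neg (lt_irrefl _)

theorem interm_succ : interm X k (i + 1) = Function.update (interm X k i) i (X (k + 1) i) := by
  ext1 t
  rcases eq_or_ne t i with rfl | ht
  · simp [interm]
  · have ht' : (t : ℕ) ≠ i := Fin.val_ne_of_ne ht
    simp only [interm, Function.update_of_ne ht]
    split_ifs <;> first | rfl | omega

variable {X} {J : Type*} {a : J → EuclideanSpace ℝ (Fin d)} {A : Fin n → Finset J}
  {dhat : Fin n → J → ℝ} {B : Fin n → Finset (Fin n)} {lhat : Fin n → Fin n → ℝ}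

theorem IsPPM.succ_eq (hX : IsPPM a A dhat B lhat X) (hcard : 1 ≤ #(A i) + #(B i)) :
    X (k + 1) i = X k i
      - (1 / (4 * (#(A i) + #(B i) : ℝ))) • blockDir a A dhat B lhat (interm X k i) i (X k i) := by
  have hm : (#(A i) + #(B i) : ℝ) ≠ 0 := by exact_mod_cast (by omega : #(A i) + #(B i) ≠ 0)
  rw [hX k i, blockDir]
  simp only [smul_sub, sum_sub_distrib, sum_const, ← smul_sum, interm]
  match_scalars <;> field_simp <;> ring

end Algorithm

theorem stmt12_general (d n : ℕ) {J : Type*}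
    (a : J → EuclideanSpace ℝ (Fin d))
    (A : Fin n → Finset J) (dhat : Fin n → J → ℝ)
    (B : Fin n → Finset (Fin n)) (lhat : Fin n → Fin n → ℝ)
    (hdhat : ∀ i, ∀ j ∈ A i, 0 ≤ dhat i j)
    (hlhat : ∀ i, ∀ q ∈ B i, 0 ≤ lhat i q)
    (hBirr : ∀ i : Fin n, i ∉ B i)
    (hBsymm : ∀ i q : Fin n, q ∈ B i ↔ i ∈ B q)
    (hlsymm : ∀ i q : Fin n, lhat i q = lhat q i)
    (hcard : ∀ i : Fin n, 1 ≤ (A i).card + (B i).card)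
    (X : ℕ → Fin n → EuclideanSpace ℝ (Fin d))
    (hX : IsPPM a A dhat B lhat X) :
    ∀ (k : ℕ) (i : Fin n),
      (1 / (2 * (4 * (((A i).card : ℝ) + ((B i).card : ℝ))))) *
          ‖blockGrad (obj a A dhat B lhat) i (interm X k (i : ℕ))‖ ^ 2
        ≤ obj a A dhat B lhat (interm X k (i : ℕ))
            - obj a A dhat B lhat (interm X k ((i : ℕ) + 1)) := by
  intro k i
  set w := interm X k i
  have hwi : w i = X k i := interm_apply_self X k i
  have hsmooth : ∀ h, obj a A dhat B lhat (Function.update w i (w i + h))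
      ≤ obj a A dhat B lhat (Function.update w i (w i))
        + ⟪blockDir a A dhat B lhat w i (w i), h⟫
        + 4 * (#(A i) + #(B i) : ℝ) / 2 * ‖h‖ ^ 2 := fun h =>
    (obj_update_add_le hBirr hBsymm hlsymm (hdhat i) (hlhat i) w (w i) h).trans
      (by gcongr; linarith [(by positivity : (0 : ℝ) ≤ #(A i) + #(B i))])
  have hdescent :=
    gradient_step_descent (F := fun y => obj a A dhat B lhat (Function.update w i y)) hsmooth
  rwa [Function.update_eq_self, hwi, ← hX.succ_eq k i (hcard i), ← interm_succ, ← hwi,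
    ← blockGrad_obj hBirr hBsymm hlsymm (hdhat i) (hlhat i)] at hdescent

theorem stmt12 (d n : ℕ) (hd : 1 ≤ d) (hn : 1 ≤ n) {J : Type*} [Fintype J]
    (a : J → EuclideanSpace ℝ (Fin d))
    (A : Fin n → Finset J) (dhat : Fin n → J → ℝ)
    (B : Fin n → Finset (Fin n)) (lhat : Fin n → Fin n → ℝ)
    (hdhat : ∀ i, ∀ j ∈ A i, 0 ≤ dhat i j)
    (hlhat : ∀ i, ∀ q ∈ B i, 0 ≤ lhat i q)
    (hBirr : ∀ i : Fin n, i ∉ B i)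
    (hBsymm : ∀ i q : Fin n, q ∈ B i ↔ i ∈ B q)
    (hlsymm : ∀ i q : Fin n, lhat i q = lhat q i)
    (hcard : ∀ i : Fin n, 1 ≤ (A i).card + (B i).card)
    (X : ℕ → Fin n → EuclideanSpace ℝ (Fin d))
    (hX : IsPPM a A dhat B lhat X) :
    ∀ (k : ℕ) (i : Fin n),
      (1 / (2 * (4 * (((A i).card : ℝ) + ((B i).card : ℝ))))) *
          ‖blockGrad (obj a A dhat B lhat) i (interm X k (i : ℕ))‖ ^ 2
        ≤ obj a A dhat B lhat (interm X k (i : ℕ))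
            - obj a A dhat B lhat (interm X k ((i : ℕ) + 1)) :=
  stmt12_general d n a A dhat B lhat hdhat hlhat hBirr hBsymm hlsymm hcard X hX
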